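/- For any reciprocal n×n positive matrix M (n > 2), Saaty's inconsistency index is bounded by Koczkodaj's index: α − 1 ≤ S(M) ≤ 1/α − 1, where α = 1 − K(M); in particular S(M) ≤ 1/(1 − K(M)) − 1. -/
import Mathlib


open Matrix Finset

/-- Koczkodaj's inconsistency index: maximum over distinct triples. -/
noncomputable def kocz {n : ℕ} (M : Matrix (Fin n) (Fin n) ℝ) : ℝ :=
  sSup {x : ℝ | ∃ i j k : Fin n, i ≠ j ∧ j ≠ k ∧ i ≠ k ∧
    x = min |1 - M i j / (M i k * M k j)| |1 - (M i k * M k j) / M i j|}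

/-- Ranking error. -/
noncomputable def eps {n : ℕ} (M : Matrix (Fin n) (Fin n) ℝ) (μ : Fin n → ℝ)
    (i j : Fin n) : ℝ :=
  (1 / M i j) * (μ i / μ j)

/-- Local ranking discrepancy. -/
noncomputable def locE {n : ℕ} (M : Matrix (Fin n) (Fin n) ℝ) (μ : Fin n → ℝ)
    (i j : Fin n) : ℝ :=
  max (eps M μ i j - 1) (1 / eps M μ i j - 1)

/-- Global ranking discrepancy. -/
noncomputable def disc {n : ℕ} (M : Matrix (Fin n) (Fin n) ℝ) (μ : Fin n → ℝ) : ℝ :=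
  sSup {x : ℝ | ∃ i j : Fin n, x = locE M μ i j}

private lemma abs_side {K a b : ℝ} (hK0 : 0 ≤ K) (ha : 0 < a) (hb : 0 < b)
    (h : |1 - a / b| ≤ K) : (1 - K) * b ≤ a ∧ (1 - K) * a ≤ b := by
  have hab := abs_le.mp h
  have h1 : 1 - K ≤ a / b := by linarith [hab.2]
  have h2 : a / b ≤ 1 + K := by linarith [hab.1]
  have h3 : a ≤ (1 + K) * b := by
    have := (div_le_iff₀ hb).mp h2; linarith
  refine ⟨(le_div_iff₀ hb).mp h1, ?_⟩
  rcases le_total a b with hc | hc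
  · nlinarith [mul_nonneg hK0 ha.le]
  · have : K * b ≤ K * a := mul_le_mul_of_nonneg_left hc hK0
    linarith

private lemma key_side {K a b : ℝ} (hK0 : 0 ≤ K) (ha : 0 < a) (hb : 0 < b)
    (h : min |1 - a / b| |1 - b / a| ≤ K) : (1 - K) * b ≤ a ∧ (1 - K) * a ≤ b := by
  rcases min_le_iff.mp h with h' | h'
  · exact abs_side hK0 ha hb h'
  · exact (abs_side hK0 hb ha h').symm

private lemma elt_lt_one {a b : ℝ} (ha : 0 < a) (hb : 0 < b) :
    min |1 - a / b| |1 - b / a| < 1 := by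
  rcases le_total a b with h | h
  · refine lt_of_le_of_lt (min_le_left _ _) ?_
    have h1 : 0 < a / b := by positivity
    have h2 : a / b ≤ 1 := by rw [div_le_one hb]; exact h
    rw [abs_of_nonneg (by linarith)]; linarith
  · refine lt_of_le_of_lt (min_le_right _ _) ?_
    have h1 : 0 < b / a := by positivity
    have h2 : b / a ≤ 1 := by rw [div_le_one ha]; exact h
    rw [abs_of_nonneg (by linarith)]; linarith

theorem saaty_le_kocz {n : ℕ} (hn : 2 < n) (M : Matrix (Fin n) (Fin n) ℝ)
    (hpos : ∀ i j, 0 < M i j) (hrec : ∀ i j, M i j = 1 / M j i)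
    (μ : Fin n → ℝ) (hμ : ∀ i, 0 < μ i) (lmax : ℝ)
    (hev : M.mulVec μ = lmax • μ) :
    (1 - kocz M) - 1 ≤ (lmax - n) / ((n : ℝ) - 1) ∧
      (lmax - n) / ((n : ℝ) - 1) ≤ 1 / (1 - kocz M) - 1 := by
  set S : Set ℝ := {x : ℝ | ∃ i j k : Fin n, i ≠ j ∧ j ≠ k ∧ i ≠ k ∧
    x = min |1 - M i j / (M i k * M k j)| |1 - (M i k * M k j) / M i j|} with hS
  have hkocz : kocz M = sSup S := rfl
  have hfin : S.Finite := by
    apply Set.Finite.subset (Set.finite_range (fun p : Fin n × Fin n × Fin n =>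
      min |1 - M p.1 p.2.1 / (M p.1 p.2.2 * M p.2.2 p.2.1)|
        |1 - (M p.1 p.2.2 * M p.2.2 p.2.1) / M p.1 p.2.1|))
    rintro x ⟨i, j, k, -, -, -, rfl⟩
    exact ⟨(i, j, k), rfl⟩
  have hbdd : BddAbove S := hfin.bddAbove
  have hi0 : (⟨0, by omega⟩ : Fin n) ≠ ⟨1, by omega⟩ := by simp [Fin.ext_iff]
  have hi1 : (⟨1, by omega⟩ : Fin n) ≠ ⟨2, by omega⟩ := by simp [Fin.ext_iff]
  have hi2 : (⟨0, by omega⟩ : Fin n) ≠ ⟨2, by omega⟩ := by simp [Fin.ext_iff]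
  have hne : S.Nonempty := ⟨_, ⟨⟨0, by omega⟩, ⟨1, by omega⟩, ⟨2, by omega⟩, hi0, hi1, hi2, rfl⟩⟩
  -- 0 ≤ kocz M
  have hK0 : 0 ≤ kocz M := by
    rw [hkocz]
    obtain ⟨x, hx⟩ := hne
    refine le_trans ?_ (le_csSup hbdd hx)
    obtain ⟨i, j, k, -, -, -, rfl⟩ := hx
    exact le_min (abs_nonneg _) (abs_nonneg _)
  -- kocz M < 1
  have hK1 : kocz M < 1 := by
    rw [hkocz]
    have hmem : sSup S ∈ S := hne.csSup_mem hfin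
    obtain ⟨i, j, k, -, -, -, heq⟩ := hmem
    rw [heq]
    exact elt_lt_one (hpos i j) (mul_pos (hpos i k) (hpos k j))
  set α : ℝ := 1 - kocz M with hα
  have hα0 : 0 < α := by simp [hα]; linarith
  have hα1 : α ≤ 1 := by simp [hα]; linarith
  -- diagonal is 1
  have hdiag : ∀ i, M i i = 1 := by
    intro i
    have h := hrec i i
    rw [eq_div_iff (ne_of_gt (hpos i i))] at h
    nlinarith [hpos i i]
  -- triple inequality (all indices, any coincidences allowed)
  have htri : ∀ i j k : Fin n, α * M i k ≤ M i j * M j k ∧ α * (M i j * M j k) ≤ M i k := by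
    intro i j k
    by_cases hij : i = j
    · subst hij
      rw [hdiag i, one_mul]
      constructor
      · nlinarith [hpos i k]
      · nlinarith [hpos i k]
    by_cases hjk : j = k
    · subst hjk
      rw [hdiag j, mul_one]
      constructor
      · nlinarith [hpos i j]
      · nlinarith [hpos i j]
    by_cases hik : i = k
    · subst hik
      have h1 : M i j * M j i = 1 := by
        rw [hrec i j, one_div]
        exact inv_mul_cancel₀ (ne_of_gt (hpos j i))
      rw [hdiag i, h1]
      constructor <;> nlinarith
    -- genuinely distinct: use membership of triple (i, k, j) in S
    have hmem : min |1 - M i k / (M i j * M j k)| |1 - (M i j * M j k) / M i k| ∈ S :=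
      ⟨i, k, j, hik, fun h => hjk h.symm, hij, rfl⟩
    have hle : min |1 - M i k / (M i j * M j k)| |1 - (M i j * M j k) / M i k| ≤ kocz M := by
      rw [hkocz]; exact le_csSup hbdd hmem
    have := key_side hK0 (hpos i k) (mul_pos (hpos i j) (hpos j k)) hle
    exact ⟨this.2, this.1⟩
  -- eigen equation pointwise
  have hev' : ∀ i, ∑ k, M i k * μ k = lmax * μ i := by
    intro i
    have h := congrFun hev i
    simpa [Matrix.mulVec, dotProduct] using h
  have hlpos : 0 < lmax := by
    have hs : 0 < ∑ k, M ⟨0, by omega⟩ k * μ k := by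
      apply Finset.sum_pos
      · intro k _; exact mul_pos (hpos _ k) (hμ k)
      · exact ⟨⟨0, by omega⟩, mem_univ _⟩
    rw [hev'] at hs
    nlinarith [hμ (⟨0, by omega⟩ : Fin n)]
  -- row estimate: α * μ i ≤ M i j * μ j and α * (M i j * μ j) ≤ μ i
  have hrow : ∀ i j : Fin n, α * μ i ≤ M i j * μ j ∧ α * (M i j * μ j) ≤ μ i := by
    intro i j
    have e1 : M i j * (lmax * μ j) = ∑ k, (M i j * M j k) * μ k := by
      rw [← hev' j, Finset.mul_sum]
      exact Finset.sum_congr rfl (fun k _ => by ring)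
    have low : α * (lmax * μ i) ≤ M i j * (lmax * μ j) := by
      rw [e1, ← hev' i, Finset.mul_sum]
      apply Finset.sum_le_sum
      intro k _
      have := (htri i j k).1
      have hμk := (hμ k).le
      calc α * (M i k * μ k) = (α * M i k) * μ k := by ring
        _ ≤ (M i j * M j k) * μ k := mul_le_mul_of_nonneg_right this hμk
    have up : α * (M i j * (lmax * μ j)) ≤ lmax * μ i := by
      rw [e1, ← hev' i, Finset.mul_sum]
      apply Finset.sum_le_sum
      intro k _
      have := (htri i j k).2
      have hμk := (hμ k).le
      calc α * ((M i j * M j k) * μ k) = (α * (M i j * M j k)) * μ k := by ring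
        _ ≤ M i k * μ k := mul_le_mul_of_nonneg_right this hμk
    constructor
    · have h' : lmax * (α * μ i) ≤ lmax * (M i j * μ j) := by
        calc lmax * (α * μ i) = α * (lmax * μ i) := by ring
          _ ≤ M i j * (lmax * μ j) := low
          _ = lmax * (M i j * μ j) := by ring
      exact le_of_mul_le_mul_left h' hlpos
    · have h' : lmax * (α * (M i j * μ j)) ≤ lmax * μ i := by
        calc lmax * (α * (M i j * μ j)) = α * (M i j * (lmax * μ j)) := by ring
          _ ≤ lmax * μ i := up
      exact le_of_mul_le_mul_left h' hlpos
  -- now fix i0 and sum over the row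
  set i0 : Fin n := ⟨0, by omega⟩ with hi0def
  set E : ℝ := ∑ k ∈ univ.erase i0, M i0 k * μ k with hE
  have hsum : lmax * μ i0 = μ i0 + E := by
    rw [← hev' i0, hE, ← Finset.add_sum_erase univ _ (mem_univ i0), hdiag i0, one_mul]
  have hcard : ((univ.erase i0).card : ℝ) = (n : ℝ) - 1 := by
    rw [Finset.card_erase_of_mem (mem_univ i0), Finset.card_univ, Fintype.card_fin]
    have h1 : 1 ≤ n := by omega
    push_cast [Nat.cast_sub h1]
    ring
  have hElow : ((n : ℝ) - 1) * (α * μ i0) ≤ E := by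
    rw [hE]
    calc ((n : ℝ) - 1) * (α * μ i0) = ∑ _k ∈ univ.erase i0, α * μ i0 := by
          rw [Finset.sum_const, nsmul_eq_mul, hcard]
      _ ≤ ∑ k ∈ univ.erase i0, M i0 k * μ k :=
          Finset.sum_le_sum (fun k _ => (hrow i0 k).1)
  have hEup : α * E ≤ ((n : ℝ) - 1) * μ i0 := by
    rw [hE, Finset.mul_sum]
    calc ∑ k ∈ univ.erase i0, α * (M i0 k * μ k)
        ≤ ∑ _k ∈ univ.erase i0, μ i0 := Finset.sum_le_sum (fun k _ => (hrow i0 k).2)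
      _ = ((n : ℝ) - 1) * μ i0 := by rw [Finset.sum_const, nsmul_eq_mul, hcard]
  have hμ0 : 0 < μ i0 := hμ i0
  have hN3 : (3 : ℝ) ≤ (n : ℝ) := by exact_mod_cast hn
  have hN1 : (0 : ℝ) < (n : ℝ) - 1 := by linarith
  -- lower bound on lmax
  have hlm2 : 1 + ((n : ℝ) - 1) * α ≤ lmax := by
    have h' : (1 + ((n : ℝ) - 1) * α) * μ i0 ≤ lmax * μ i0 := by
      rw [hsum]; nlinarith [hElow]
    exact le_of_mul_le_mul_right h' hμ0
  -- upper bound: α * lmax ≤ α + (n - 1)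
  have hαlm : α * lmax ≤ α + ((n : ℝ) - 1) := by
    have h' : (α * lmax) * μ i0 ≤ (α + ((n : ℝ) - 1)) * μ i0 := by
      have : (α * lmax) * μ i0 = α * (μ i0 + E) := by rw [← hsum]; ring
      rw [this]; nlinarith [hEup]
    exact le_of_mul_le_mul_right h' hμ0
  have hlm : lmax ≤ 1 + ((n : ℝ) - 1) * (1 / α) := by
    have h6 := mul_le_mul_of_nonneg_right hαlm (le_of_lt (one_div_pos.mpr hα0))
    have h7 : α * lmax * (1 / α) = lmax := by field_simp
    have h8 : (α + ((n : ℝ) - 1)) * (1 / α) = 1 + ((n : ℝ) - 1) * (1 / α) := by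
      field_simp
    linarith [h6, h7.le, h7.ge, h8.le, h8.ge]
  constructor
  · rw [le_div_iff₀ hN1]
    have : ((1 - kocz M) - 1) * ((n : ℝ) - 1) = ((n : ℝ) - 1) * α - ((n : ℝ) - 1) := by
      rw [← hα]; ring
    rw [this]
    linarith [hlm2]
  · rw [div_le_iff₀ hN1]
    have : (1 / (1 - kocz M) - 1) * ((n : ℝ) - 1)
        = ((n : ℝ) - 1) * (1 / α) - ((n : ℝ) - 1) := by rw [← hα]; ring
    rw [this]
    linarith [hlm]
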